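/- Let p and q be coprime positive integers. Let g ∈ ℂ⟦x⟧[y] be such that p divides q·j − i for every monomial x^i y^j appearing in g (i.e., g is invariant under the cyclic action ξ·(x,y) = (ξ^{−1}x, ξ^{q}y) of the p-th roots of unity). Then for every natural number n ≥ deg_y(g), there exists h ∈ ℂ⟦x⟧[y] such that every monomial x^i y^j appearing in h satisfies p·i + q·j ≥ p·q·n, and h(x^p, x^q y) = x^{p·q·n} · g(x,y) in ℂ⟦x⟧[y]. -/

import Mathlib

open Polynomial PowerSeries

/-!
Define `h` coefficientwise by `coeff_{x^i y^j} h = coeff_{x^(p·i + q·j - N)} g` when the weight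
`p·i + q·j` is at least `N = p·q·n`, and `0` otherwise. The substitution sends `x^i y^j` to
`x^(p·i + q·j) y^j`, so `h(x^p, x^q y)` and `x^N · g` agree on every monomial `x^m y^j` whose
exponent `m` is a weight `p·i + q·j`. Every other monomial is absent from `h(x^p, x^q y)`,
and also from `x^N · g`: since `p ∣ N` and `q·j ≤ N ≤ m`, the invariance of `g` would make `m`
a weight.
-/

/-- The substitution `f(x,y) ↦ f(x^p, x^q y)` on `ℂ⟦x⟧[y]`: writing
`f = Σ a_{ij} x^i y^j`, it is `Σ a_{ij} x^{p·i+q·j} y^j`. The coefficient of `y^j`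
is `x^{q·j} · (coeff_j f)(x^p)`. -/
noncomputable def substPQ (p q : ℕ) (f : Polynomial (PowerSeries ℂ)) :
    Polynomial (PowerSeries ℂ) :=
  ∑ j ∈ f.support,
    Polynomial.monomial j
      ((PowerSeries.X : PowerSeries ℂ) ^ (q * j) *
        PowerSeries.mk fun m =>
          if p ∣ m then PowerSeries.coeff (R := ℂ) (m / p) (f.coeff j) else 0)

theorem coeff_substPQ {p : ℕ} (hp : p ≠ 0) (q : ℕ) (f : Polynomial (PowerSeries ℂ)) (j : ℕ) :
    (substPQ p q f).coeff j = PowerSeries.X ^ (q * j) * PowerSeries.expand p hp (f.coeff j) := by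
  have hexpand : (PowerSeries.mk fun m => if p ∣ m then coeff (m / p) (f.coeff j) else 0) =
      expand p hp (f.coeff j) := by
    ext m
    rw [coeff_mk, PowerSeries.coeff_expand]
  rw [substPQ, Polynomial.finsetSum_coeff]
  simp only [Polynomial.coeff_monomial, Finset.sum_ite_eq']
  by_cases hj : j ∈ f.support
  · rw [if_pos hj, hexpand]
  · rw [if_neg hj, Polynomial.notMem_support_iff.mp hj, map_zero, mul_zero]

theorem coeff_coeff_substPQ_weight {p : ℕ} (hp : p ≠ 0) (q : ℕ) (f : Polynomial (PowerSeries ℂ))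
    (i j : ℕ) : coeff (p * i + q * j) ((substPQ p q f).coeff j) = coeff i (f.coeff j) := by
  rw [coeff_substPQ hp, PowerSeries.coeff_X_pow_mul, PowerSeries.coeff_expand_mul]

theorem coeff_coeff_substPQ_of_ne_weight {p : ℕ} (hp : p ≠ 0) (q : ℕ)
    (f : Polynomial (PowerSeries ℂ)) {j m : ℕ} (hm : ∀ i, p * i + q * j ≠ m) :
    coeff m ((substPQ p q f).coeff j) = 0 := by
  rw [coeff_substPQ hp, PowerSeries.coeff_X_pow_mul']
  split_ifs with hjm
  · refine coeff_expand_of_not_dvd p hp _ fun ⟨i, hi⟩ => hm i ?_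
    omega
  · rfl

noncomputable def substPQPreimage (p q N : ℕ) (g : Polynomial (PowerSeries ℂ)) :
    Polynomial (PowerSeries ℂ) :=
  ∑ j ∈ g.support, monomial j (PowerSeries.mk fun i =>
    if N ≤ p * i + q * j then coeff (p * i + q * j - N) (g.coeff j) else 0)

theorem coeff_coeff_substPQPreimage (p q N : ℕ) (g : Polynomial (PowerSeries ℂ)) (i j : ℕ) :
    coeff i ((substPQPreimage p q N g).coeff j) =
      if N ≤ p * i + q * j then coeff (p * i + q * j - N) (g.coeff j) else 0 := by
  rw [substPQPreimage, Polynomial.finsetSum_coeff]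
  simp only [Polynomial.coeff_monomial, Finset.sum_ite_eq']
  by_cases hj : j ∈ g.support
  · rw [if_pos hj, coeff_mk]
  · simp [Polynomial.notMem_support_iff.mp hj]

theorem le_weight_of_coeff_coeff_substPQPreimage_ne_zero {p q N : ℕ}
    {g : Polynomial (PowerSeries ℂ)} {i j : ℕ}
    (h : coeff i ((substPQPreimage p q N g).coeff j) ≠ 0) : N ≤ p * i + q * j := by
  rw [coeff_coeff_substPQPreimage] at h
  by_contra hN
  exact h (if_neg hN)

theorem exists_weight_eq_of_dvd {p q j m : ℕ} (hjm : q * j ≤ m) (hdvd : (p : ℤ) ∣ m - q * j) :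
    ∃ i, p * i + q * j = m := by
  obtain ⟨i, hi⟩ : p ∣ m - q * j := Int.natCast_dvd_natCast.mp (by push_cast [hjm]; exact hdvd)
  exact ⟨i, by omega⟩

theorem substPQ_substPQPreimage {p : ℕ} (hp : p ≠ 0) (q : ℕ) {N : ℕ} (hN : (p : ℤ) ∣ N)
    {g : Polynomial (PowerSeries ℂ)} (hdeg : ∀ j ∈ g.support, q * j ≤ N)
    (hinv : ∀ i j : ℕ, coeff i (g.coeff j) ≠ 0 → (p : ℤ) ∣ (q * j - i : ℤ)) :
    substPQ p q (substPQPreimage p q N g) = Polynomial.C (PowerSeries.X ^ N) * g := by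
  ext j m
  rw [Polynomial.coeff_C_mul, PowerSeries.coeff_X_pow_mul']
  by_cases hm : ∃ i, p * i + q * j = m
  · obtain ⟨i, rfl⟩ := hm
    rw [coeff_coeff_substPQ_weight hp, coeff_coeff_substPQPreimage]
  · rw [not_exists] at hm
    rw [coeff_coeff_substPQ_of_ne_weight hp _ _ hm]
    split_ifs with hNm
    · by_contra hne
      have hinv' := hinv _ _ (Ne.symm hne)
      have hjN := hdeg j (mem_support_iff.mpr fun hj => hne (by rw [hj, map_zero]))
      push_cast [hNm] at hinv'
      obtain ⟨i, hi⟩ := exists_weight_eq_of_dvd (hjN.trans hNm) <| by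
        rw [show (m : ℤ) - q * j = N - (q * j - (m - N)) by ring]
        exact dvd_sub hN hinv'
      exact hm i hi
    · rfl

theorem invariant_mul_xpqn_is_pullback_general (p q : ℕ) (hp : 0 < p)
    (g : Polynomial (PowerSeries ℂ))
    (hinv : ∀ i j : ℕ, PowerSeries.coeff (R := ℂ) i (g.coeff j) ≠ 0 → (p : ℤ) ∣ (q * j - i : ℤ))
    (n : ℕ) (hn : g.natDegree ≤ n) :
    ∃ h : Polynomial (PowerSeries ℂ),
      (∀ i j : ℕ, PowerSeries.coeff (R := ℂ) i (h.coeff j) ≠ 0 → p * q * n ≤ p * i + q * j) ∧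
      substPQ p q h = Polynomial.C ((PowerSeries.X : PowerSeries ℂ) ^ (p * q * n)) * g := by
  have hdvd : (p : ℤ) ∣ (p * q * n : ℕ) := ⟨q * n, by push_cast; ring⟩
  have hdeg : ∀ j ∈ g.support, q * j ≤ p * q * n := fun j hj =>
    calc q * j ≤ q * n := Nat.mul_le_mul_left q ((le_natDegree_of_mem_supp j hj).trans hn)
      _ ≤ p * (q * n) := Nat.le_mul_of_pos_left _ hp
      _ = p * q * n := (mul_assoc p q n).symm
  exact ⟨substPQPreimage p q (p * q * n) g,
    fun _ _ => le_weight_of_coeff_coeff_substPQPreimage_ne_zero,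
    substPQ_substPQPreimage hp.ne' q hdvd hdeg hinv⟩

/-- The key inclusion in `R·I_{p,q}^n = R¹·x^{pqn}` (Lemma 4.14), at the level of
representatives: if `g ∈ ℂ⟦x⟧[y]` is invariant under the cyclic action of the `p`-th roots
of unity on `X(p;−1,q)` (i.e. `p ∣ q·j − i` for every monomial `x^i y^j` appearing in `g`),
then for every `n ≥ deg_y g` there exists `h ∈ ℂ⟦x⟧[y]`, all of whose monomials `x^i y^j`
satisfy `p·i + q·j ≥ p·q·n`, with `h(x^p, x^q y) = x^{p·q·n} · g(x,y)`. -/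
theorem invariant_mul_xpqn_is_pullback (p q : ℕ) (hp : 0 < p) (hq : 0 < q)
    (hpq : Nat.Coprime p q) (g : Polynomial (PowerSeries ℂ))
    (hinv : ∀ i j : ℕ, PowerSeries.coeff (R := ℂ) i (g.coeff j) ≠ 0 → (p : ℤ) ∣ (q * j - i : ℤ))
    (n : ℕ) (hn : g.natDegree ≤ n) :
    ∃ h : Polynomial (PowerSeries ℂ),
      (∀ i j : ℕ, PowerSeries.coeff (R := ℂ) i (h.coeff j) ≠ 0 → p * q * n ≤ p * i + q * j) ∧
      substPQ p q h = Polynomial.C ((PowerSeries.X : PowerSeries ℂ) ^ (p * q * n)) * g :=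
  invariant_mul_xpqn_is_pullback_general p q hp g hinv n hn
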